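/- If the minus continued fraction expansion of an irrational α is related to its regular (plus) continued fraction expansion α = [a₀; a₁, a₂, …] (a₀ ∈ ℤ, aᵢ ∈ ℤ_{>0} for i ≥ 1), then as sequences (b₀, b₁, b₂, …) = (a₀+1, 2 repeated (a₁−1) times, a₂+2, 2 repeated (a₃−1) times, a₄+2, …). -/

import Mathlib

/-- Value of a finite 'minus' continued fraction `[[b₀; b₁, …, b_k]]`. -/
noncomputable def mcfList : List ℤ → ℝ
  | [] => 0
  | b :: l => (b : ℝ) - 1 / mcfList l

noncomputable def mcfConv (b : ℕ → ℤ) (k : ℕ) : ℝ :=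
  mcfList ((List.range (k + 1)).map b)

/-- Value of a finite 'plus' (regular) continued fraction `[a₀; a₁, …, a_k]`. -/
noncomputable def pcfList : List ℤ → ℝ
  | [] => 0
  | b :: l => (b : ℝ) + 1 / pcfList l

noncomputable def pcfConv (a : ℕ → ℤ) (k : ℕ) : ℝ :=
  pcfList ((List.range (k + 1)).map a)

/-- The first `1 + n` blocks of the sequence
    `(a₀+1, 2,…,2 (a₁−1 times), a₂+2, 2,…,2 (a₃−1 times), a₄+2, …)`. -/
def blockList (a : ℕ → ℤ) (n : ℕ) : List ℤ :=
  (a 0 + 1) :: (List.range n).flatMap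
    (fun j => List.replicate (a (2 * j + 1) - 1).toNat 2 ++ [a (2 * j + 2) + 2])

/-!
Both expansions pin down the integer part: `a₀ < α < a₀ + 1` and `b₀ - 1 < α < b₀`, so
`b₀ = ⌊α⌋ + 1 = a₀ + 1`. Stripping `b₀` leaves the minus expansion `[[b₁; b₂, …]]` of
`α' = (a₀ + 1 - α)⁻¹ = 1 + 1 / ([a₁; a₂, …] - 1)`, whose plus expansion is `[1; a₁ - 1, a₂, …]`,
or `[a₂ + 1; a₃, …]` when `a₁ = 1`. The block sequence of this expansion is that of `a` with
its first entry removed, so induction on the length of the block list concludes.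
-/

open Filter Topology Set

section Seq

variable {M : Type*}

def seqCons (x : M) (f : ℕ → M) : ℕ → M
  | 0 => x
  | i + 1 => f i

def seqTail (f : ℕ → M) : ℕ → M := fun i => f (i + 1)

lemma seqTail_seqCons (x : M) (f : ℕ → M) : seqTail (seqCons x f) = f := rfl

lemma seqCons_head_seqTail (f : ℕ → M) : seqCons (f 0) (seqTail f) = f := by
  funext i; cases i <;> rfl

lemma map_range_succ_eq_cons (f : ℕ → M) (k : ℕ) :
    (List.range (k + 1)).map f = f 0 :: (List.range k).map (seqTail f) := by
  rw [List.range_succ_eq_map, List.map_cons, List.map_map]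
  rfl

end Seq

lemma pcfConv_eq_head_add (f : ℕ → ℤ) (k : ℕ) :
    pcfConv f k = f 0 + 1 / pcfList ((List.range k).map (seqTail f)) := by
  rw [pcfConv, map_range_succ_eq_cons, pcfList]

lemma mcfConv_eq_head_sub (f : ℕ → ℤ) (k : ℕ) :
    mcfConv f k = f 0 - 1 / mcfList ((List.range k).map (seqTail f)) := by
  rw [mcfConv, map_range_succ_eq_cons, mcfList]

lemma pcfConv_succ (f : ℕ → ℤ) (k : ℕ) :
    pcfConv f (k + 1) = f 0 + 1 / pcfConv (seqTail f) k :=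
  pcfConv_eq_head_add f (k + 1)

lemma mcfConv_succ (f : ℕ → ℤ) (k : ℕ) :
    mcfConv f (k + 1) = f 0 - 1 / mcfConv (seqTail f) k :=
  mcfConv_eq_head_sub f (k + 1)

lemma pcfConv_seqCons (x y : ℤ) (f : ℕ → ℤ) (k : ℕ) :
    pcfConv (seqCons x f) k = pcfConv (seqCons y f) k + (x - y) := by
  rw [pcfConv_eq_head_add, pcfConv_eq_head_add, seqTail_seqCons, seqTail_seqCons]
  simp only [seqCons]
  ring

lemma one_div_pcfList_mem_Icc :
    ∀ l : List ℤ, (∀ x ∈ l, 1 ≤ x) → 1 / pcfList l ∈ Icc (0 : ℝ) 1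
  | [], _ => by simp [pcfList]
  | x :: l, hl => by
    have hx : (1 : ℝ) ≤ x := by exact_mod_cast hl x List.mem_cons_self
    have ih := one_div_pcfList_mem_Icc l fun y hy => hl y (List.mem_cons_of_mem x hy)
    have h1 : 1 ≤ pcfList (x :: l) := by rw [pcfList]; linarith [ih.1]
    exact ⟨by positivity, div_le_one_of_le₀ h1 (by positivity)⟩

lemma one_div_mcfList_mem_Icc :
    ∀ l : List ℤ, (∀ x ∈ l, 2 ≤ x) → 1 / mcfList l ∈ Icc (0 : ℝ) 1
  | [], _ => by simp [mcfList]
  | x :: l, hl => by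
    have hx : (2 : ℝ) ≤ x := by exact_mod_cast hl x List.mem_cons_self
    have ih := one_div_mcfList_mem_Icc l fun y hy => hl y (List.mem_cons_of_mem x hy)
    have h1 : 1 ≤ mcfList (x :: l) := by rw [mcfList]; linarith [ih.2]
    exact ⟨by positivity, div_le_one_of_le₀ h1 (by positivity)⟩

lemma pcfConv_mem_Icc {a : ℕ → ℤ} (ha : ∀ i, 1 ≤ i → 1 ≤ a i) (k : ℕ) :
    pcfConv a k ∈ Icc (a 0 : ℝ) (a 0 + 1) := by
  have h := one_div_pcfList_mem_Icc ((List.range k).map (seqTail a)) (by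
    simp only [List.mem_map, forall_exists_index, and_imp, forall_apply_eq_imp_iff₂]
    exact fun i _ => ha (i + 1) (Nat.le_add_left 1 i))
  rw [pcfConv_eq_head_add]
  exact ⟨by linarith [h.1], by linarith [h.2]⟩

lemma mcfConv_mem_Icc {b : ℕ → ℤ} (hb : ∀ i, 1 ≤ i → 2 ≤ b i) (k : ℕ) :
    mcfConv b k ∈ Icc (b 0 - 1 : ℝ) (b 0) := by
  have h := one_div_mcfList_mem_Icc ((List.range k).map (seqTail b)) (by
    simp only [List.mem_map, forall_exists_index, and_imp, forall_apply_eq_imp_iff₂]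
    exact fun i _ => hb (i + 1) (Nat.le_add_left 1 i))
  rw [mcfConv_eq_head_sub]
  exact ⟨by linarith [h.2], by linarith [h.1]⟩

lemma tendsto_pcfConv_seqTail {a : ℕ → ℤ} {α : ℝ} (h : Tendsto (pcfConv a) atTop (𝓝 α))
    (hα : α ≠ a 0) : Tendsto (pcfConv (seqTail a)) atTop (𝓝 (α - a 0)⁻¹) := by
  refine (((h.comp (tendsto_add_atTop_nat 1)).sub_const (a 0 : ℝ)).inv₀
    (sub_ne_zero.2 hα)).congr fun k => ?_
  simp [pcfConv_succ]

lemma tendsto_mcfConv_seqTail {b : ℕ → ℤ} {α : ℝ} (h : Tendsto (mcfConv b) atTop (𝓝 α))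
    (hα : α ≠ b 0) : Tendsto (mcfConv (seqTail b)) atTop (𝓝 ((b 0 : ℝ) - α)⁻¹) := by
  refine (((h.comp (tendsto_add_atTop_nat 1)).const_sub (b 0 : ℝ)).inv₀
    (sub_ne_zero.2 hα.symm)).congr fun k => ?_
  simp [mcfConv_succ]

lemma tendsto_pcfConv_seqCons {f : ℕ → ℤ} {β : ℝ} (x : ℤ)
    (h : Tendsto (pcfConv f) atTop (𝓝 β)) (hβ : β ≠ 0) :
    Tendsto (pcfConv (seqCons x f)) atTop (𝓝 (x + β⁻¹)) := by
  refine (tendsto_add_atTop_iff_nat 1).1 ((h.inv₀ hβ).const_add (x : ℝ) |>.congr fun k => ?_)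
  rw [pcfConv_succ, one_div]
  rfl

section

/-- `α = [a₀; a₁, a₂, …]`. -/
structure IsPlusCF (a : ℕ → ℤ) (α : ℝ) : Prop where
  one_le : ∀ i, 1 ≤ i → 1 ≤ a i
  tendsto : Tendsto (pcfConv a) atTop (𝓝 α)

/-- `α = [[b₀; b₁, b₂, …]]`. -/
structure IsMinusCF (b : ℕ → ℤ) (α : ℝ) : Prop where
  two_le : ∀ i, 1 ≤ i → 2 ≤ b i
  tendsto : Tendsto (mcfConv b) atTop (𝓝 α)

variable {α : ℝ} {a b : ℕ → ℤ}

lemma IsPlusCF.floor_eq (h : IsPlusCF a α) (hα : Irrational α) : ⌊α⌋ = a 0 := by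
  have hmem : α ∈ Icc (a 0 : ℝ) (a 0 + 1) :=
    isClosed_Icc.mem_of_tendsto h.tendsto (Eventually.of_forall (pcfConv_mem_Icc h.one_le))
  have hne : α ≠ (a 0 + 1 : ℤ) := hα.ne_int _
  push_cast at hne
  exact Int.floor_eq_iff.2 ⟨hmem.1, lt_of_le_of_ne hmem.2 hne⟩

lemma IsMinusCF.floor_eq (h : IsMinusCF b α) (hα : Irrational α) : ⌊α⌋ = b 0 - 1 := by
  have hmem : α ∈ Icc (b 0 - 1 : ℝ) (b 0) :=
    isClosed_Icc.mem_of_tendsto h.tendsto (Eventually.of_forall (mcfConv_mem_Icc h.two_le))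
  rw [Int.floor_eq_iff]
  push_cast
  exact ⟨hmem.1, by linarith [lt_of_le_of_ne hmem.2 (hα.ne_int _)]⟩

lemma IsMinusCF.seqTail (h : IsMinusCF b α) (hα : Irrational α) :
    IsMinusCF (seqTail b) ((b 0 : ℝ) - α)⁻¹ where
  two_le i _ := h.two_le (i + 1) (Nat.le_add_left 1 i)
  tendsto := tendsto_mcfConv_seqTail h.tendsto (hα.ne_int _)

/-- The plus expansion of `(a₀ + 1 - α)⁻¹` when `α = [a₀; a₁, a₂, …]`: it is
`[1; a₁ - 1, a₂, …]`, which for `a₁ = 1` normalizes to `[a₂ + 1; a₃, …]`. -/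
def minusShift (a : ℕ → ℤ) : ℕ → ℤ :=
  if 2 ≤ a 1 then seqCons 1 (seqCons (a 1 - 1) fun i => a (i + 2))
  else seqCons (a 2 + 1) fun i => a (i + 3)

lemma one_le_minusShift (ha : ∀ i, 1 ≤ i → 1 ≤ a i) (i : ℕ) (hi : 1 ≤ i) :
    1 ≤ minusShift a i := by
  obtain ⟨j, rfl⟩ := Nat.exists_eq_add_of_le' hi
  unfold minusShift
  split_ifs with h
  · cases j with
    | zero => simp only [seqCons]; omega
    | succ j => exact ha (j + 2) (by omega)
  · exact ha (j + 3) (by omega)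

lemma IsPlusCF.tendsto_minusShift (h : IsPlusCF a α) (hα : Irrational α) :
    Tendsto (pcfConv (minusShift a)) atTop (𝓝 (((a 0 + 1 : ℤ) : ℝ) - α)⁻¹) := by
  set β := (α - a 0)⁻¹ with hβ
  have hβirr : Irrational β := (hα.sub_intCast _).inv
  have hβ1 : β - 1 ≠ 0 := sub_ne_zero.2 (by exact_mod_cast hβirr.ne_int 1)
  have htail : Tendsto (pcfConv (seqTail a)) atTop (𝓝 β) :=
    tendsto_pcfConv_seqTail h.tendsto (hα.ne_int _)
  have hval : (((a 0 + 1 : ℤ) : ℝ) - α)⁻¹ = 1 + (β - 1)⁻¹ := by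
    have hd : α - a 0 ≠ 0 := sub_ne_zero.2 (hα.ne_int _)
    have he : (a 0 : ℝ) + 1 - α ≠ 0 := by
      have := hα.ne_int (a 0 + 1)
      push_cast at this
      intro hzero
      exact this (by linarith)
    have : β - 1 = (a 0 + 1 - α) / (α - a 0) := by rw [hβ]; field_simp; ring
    rw [this, inv_div]
    push_cast
    field_simp
    ring
  have htail_eq : seqTail a = seqCons (a 1) fun i => a (i + 2) :=
    (seqCons_head_seqTail (seqTail a)).symm
  rw [hval, minusShift]
  split_ifs with ha1
  · -- `β - 1 = [a₁ - 1; a₂, a₃, …]`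
    rw [htail_eq] at htail
    simpa using tendsto_pcfConv_seqCons 1 ((htail.sub_const 1).congr fun k => by
      rw [pcfConv_seqCons (a 1) (a 1 - 1)]; push_cast; ring) hβ1
  · -- `a₁ = 1`, so `(β - 1)⁻¹ = [a₂; a₃, …]`
    have ha1' : seqTail a 0 = 1 := by have := h.one_le 1 le_rfl; exact (by omega : a 1 = 1)
    have hne : β ≠ seqTail a 0 := by rw [ha1']; exact_mod_cast hβirr.ne_int 1
    have h2 := tendsto_pcfConv_seqTail htail hne
    rw [ha1', Int.cast_one, ← seqCons_head_seqTail (seqTail (seqTail a))] at h2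
    refine (h2.const_add 1).congr fun k => ?_
    rw [pcfConv_seqCons (a 2 + 1) (a 2), add_comm]
    congr 1
    push_cast
    ring

lemma IsPlusCF.minusShift (h : IsPlusCF a α) (hα : Irrational α) :
    IsPlusCF (minusShift a) (((a 0 + 1 : ℤ) : ℝ) - α)⁻¹ :=
  ⟨one_le_minusShift h.one_le, h.tendsto_minusShift hα⟩

lemma blockList_succ_eq (a : ℕ → ℤ) (n : ℕ) :
    blockList a (n + 1) = (a 0 + 1) :: (List.replicate (a 1 - 1).toNat 2 ++
      (a 2 + 2) :: (blockList (fun i => a (i + 2)) n).tail) := by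
  rw [blockList, List.range_succ_eq_map, List.flatMap_cons, List.flatMap_map,
    List.append_assoc, List.singleton_append]
  rfl

lemma blockList_tail_congr {a a' : ℕ → ℤ} (h : seqTail a = seqTail a') (n : ℕ) :
    (blockList a n).tail = (blockList a' n).tail := by
  have h' : ∀ i, a (i + 1) = a' (i + 1) := congrFun h
  simp only [blockList, List.tail_cons, h']

lemma blockList_succ (a : ℕ → ℤ) (n : ℕ) (ha1 : 1 ≤ a 1) :
    blockList a (n + 1) =
      (a 0 + 1) :: blockList (minusShift a) (if 2 ≤ a 1 then n + 1 else n) := by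
  rw [blockList_succ_eq, minusShift]
  split_ifs with h
  · rw [blockList_succ_eq]
    have : (a 1 - 1).toNat = (a 1 - 1 - 1).toNat + 1 := by omega
    rw [this, List.replicate_succ]
    rfl
  · rw [show (a 1 - 1).toNat = 0 by omega, List.replicate_zero, List.nil_append]
    refine congrArg _ (List.cons_eq_cons.2 ⟨?_, blockList_tail_congr rfl n⟩)
    simp only [seqCons]
    ring

theorem map_range_eq_blockList (hα : Irrational α) (ha : IsPlusCF a α)
    (hb : IsMinusCF b α) (n : ℕ) :
    (List.range (blockList a n).length).map b = blockList a n := by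
  induction hlen : (blockList a n).length generalizing α a b n with
  | zero => simp [blockList] at hlen
  | succ m ih =>
    have hb0 : b 0 = a 0 + 1 := by linarith [ha.floor_eq hα, hb.floor_eq hα]
    rw [map_range_succ_eq_cons]
    cases n with
    | zero =>
      obtain rfl : m = 0 := by simpa [blockList] using hlen.symm
      simp [blockList, hb0]
    | succ n =>
      rw [blockList_succ a n (ha.one_le 1 le_rfl)] at hlen ⊢
      have hb' := hb.seqTail hα
      rw [hb0] at hb'
      rw [hb0, ih ((hα.intCast_sub _).inv) (ha.minusShift hα) hb' _ (Nat.succ_injective hlen)]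

end

/-- If `α` is irrational with regular ('plus') continued fraction expansion
    `α = [a₀; a₁, a₂, …]` (`aᵢ ≥ 1` for `i ≥ 1`) and minus continued fraction
    expansion `α = [[b₀; b₁, b₂, …]]` (`bᵢ ≥ 2` for `i ≥ 1`), then as sequences
    `(b₀, b₁, …) = (a₀+1, 2 (a₁−1 times), a₂+2, 2 (a₃−1 times), a₄+2, …)`. -/
theorem minus_cf_from_plus_cf (α : ℝ) (hα : Irrational α) (a b : ℕ → ℤ)
    (ha : ∀ i, 1 ≤ i → 1 ≤ a i)
    (haconv : Filter.Tendsto (pcfConv a) Filter.atTop (nhds α))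
    (hb : ∀ i, 1 ≤ i → 2 ≤ b i)
    (hbconv : Filter.Tendsto (mcfConv b) Filter.atTop (nhds α)) :
    ∀ n, (List.range (blockList a n).length).map b = blockList a n :=
  map_range_eq_blockList hα ⟨ha, haconv⟩ ⟨hb, hbconv⟩
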